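/- arXiv:2203.05153 — 2 statements merged into one kernel-verified Lean document; each statement's English description precedes it below -/
import Mathlib

section
/- Suppose the simplicial models M and M' are finite, and let □ ∈ {K, D}. Then there exists n ∈ ℕ such that S^□_n is the maximum □-simulation of M by M' with respect to inclusion (S^□_n is a □-simulation containing every □-simulation). Moreover, if S^□_n is total for every n ∈ ℕ, then this maximum □-simulation is total. -/
/-- A simplicial model: a pure chromatic simplicial complex, colored by the
agents in `Agent`, whose vertices are labeled by sets of atomic propositions.
Each atomic proposition belongs to an agent (`agentOf`), and the label of a
vertex only contains atoms of the color of that vertex. -/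
structure SimplicialModel (Agent Atom Vertex : Type) [Fintype Agent]
    [DecidableEq Vertex] where
  simplices : Set (Finset Vertex)
  chi : Vertex → Agent
  label : Vertex → Set Atom
  agentOf : Atom → Agent
  simplex_nonempty : ∀ X ∈ simplices, X.Nonempty
  down_closed : ∀ X ∈ simplices, ∀ Y : Finset Vertex, Y ⊆ X → Y.Nonempty → Y ∈ simplices
  chi_injOn : ∀ X ∈ simplices, Set.InjOn chi ↑X
  pure : ∀ X ∈ simplices, ∃ F ∈ simplices, X ⊆ F ∧ F.card = Fintype.card Agent
  label_agent : ∀ v, ∀ p ∈ label v, agentOf p = chi v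

namespace SimplicialModel

variable {Agent Atom Vertex Vertex' : Type} [Fintype Agent]
  [DecidableEq Vertex] [DecidableEq Vertex']

/-- The facets (maximal simplices) of a simplicial model: the simplices with
exactly `|Agent|` vertices. -/
def facets (M : SimplicialModel Agent Atom Vertex) : Set (Finset Vertex) :=
  {X ∈ M.simplices | X.card = Fintype.card Agent}

/-- The type of facets of a simplicial model. -/
def Facet (M : SimplicialModel Agent Atom Vertex) : Type := {X : Finset Vertex // X ∈ M.facets}

/-- The labeling of a facet: union of the labels of its vertices. -/
def flabel (M : SimplicialModel Agent Atom Vertex) (X : M.Facet) : Set Atom :=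
  ⋃ v ∈ (X.1 : Finset Vertex), M.label v

/-- `χ(X ∩ Y)`: the set of colors of the common vertices of two facets. -/
def chiInter (M : SimplicialModel Agent Atom Vertex) (X Y : M.Facet) : Set Agent :=
  M.chi '' ↑(X.1 ∩ Y.1)

/-- The indistinguishability relation `X ∼ₐ Y` : `a ∈ χ(X ∩ Y)`. -/
def indist (M : SimplicialModel Agent Atom Vertex) (a : Agent) (X Y : M.Facet) : Prop :=
  a ∈ M.chiInter X Y

/-- A morphism of simplicial models: maps simplices to simplices, preserves
colors and preserves labels. -/
def IsMorphism (M : SimplicialModel Agent Atom Vertex) (M' : SimplicialModel Agent Atom Vertex')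
    (f : Vertex → Vertex') : Prop :=
  (∀ X ∈ M.simplices, X.image f ∈ M'.simplices) ∧
  (∀ v, M'.chi (f v) = M.chi v) ∧
  (∀ v, M'.label (f v) = M.label v)

/-- Smart constructor for a simplicial model: the complex generated by a given
set of facets, each of which has `|Agent|` vertices with pairwise distinct colors. -/
def ofFacets [Nonempty Agent] (Fs : Set (Finset Vertex)) (chi : Vertex → Agent)
    (label : Vertex → Set Atom) (agentOf : Atom → Agent)
    (hcard : ∀ F ∈ Fs, F.card = Fintype.card Agent)
    (hinj : ∀ F ∈ Fs, Set.InjOn chi ↑F)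
    (hlab : ∀ v, ∀ p ∈ label v, agentOf p = chi v) :
    SimplicialModel Agent Atom Vertex where
  simplices := {X | X.Nonempty ∧ ∃ F ∈ Fs, X ⊆ F}
  chi := chi
  label := label
  agentOf := agentOf
  simplex_nonempty := fun _ hX => hX.1
  down_closed := by
    rintro X ⟨-, F, hF, hXF⟩ Y hYX hY
    exact ⟨hY, F, hF, hYX.trans hXF⟩
  chi_injOn := by
    rintro X ⟨-, F, hF, hXF⟩
    exact (hinj F hF).mono (Finset.coe_subset.mpr hXF)
  pure := by
    rintro X ⟨-, F, hF, hXF⟩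
    refine ⟨F, ⟨?_, F, hF, subset_rfl⟩, hXF, hcard F hF⟩
    rw [← Finset.card_pos, hcard F hF]
    exact Fintype.card_pos
  label_agent := hlab

end SimplicialModel

/-- The language `L_K⁺` of positive epistemic formulas:
`φ ::= p | ¬p | φ ∨ φ | φ ∧ φ | K_a φ`. -/
inductive PosFormula (Agent Atom : Type) : Type where
  | atom : Atom → PosFormula Agent Atom
  | natom : Atom → PosFormula Agent Atom
  | or : PosFormula Agent Atom → PosFormula Agent Atom → PosFormula Agent Atom
  | and : PosFormula Agent Atom → PosFormula Agent Atom → PosFormula Agent Atom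
  | know : Agent → PosFormula Agent Atom → PosFormula Agent Atom

/-- The language `L_D⁺` of positive epistemic formulas with distributed knowledge:
`φ ::= p | ¬p | φ ∨ φ | φ ∧ φ | D_A φ`. -/
inductive PosFormulaD (Agent Atom : Type) : Type where
  | atom : Atom → PosFormulaD Agent Atom
  | natom : Atom → PosFormulaD Agent Atom
  | or : PosFormulaD Agent Atom → PosFormulaD Agent Atom → PosFormulaD Agent Atom
  | and : PosFormulaD Agent Atom → PosFormulaD Agent Atom → PosFormulaD Agent Atom
  | dknow : Set Agent → PosFormulaD Agent Atom → PosFormulaD Agent Atom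

namespace SimplicialModel

variable {Agent Atom Vertex Vertex' : Type} [Fintype Agent]
  [DecidableEq Vertex] [DecidableEq Vertex']

/-- Truth of a positive formula of `L_K⁺` at a facet of a simplicial model. -/
def satK (M : SimplicialModel Agent Atom Vertex) :
    PosFormula Agent Atom → M.Facet → Prop
  | .atom p, X => p ∈ M.flabel X
  | .natom p, X => p ∉ M.flabel X
  | .or φ ψ, X => M.satK φ X ∨ M.satK ψ X
  | .and φ ψ, X => M.satK φ X ∧ M.satK ψ X
  | .know a φ, X => ∀ Y : M.Facet, M.indist a X Y → M.satK φ Y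

/-- Truth of a positive formula of `L_D⁺` at a facet of a simplicial model. -/
def satD (M : SimplicialModel Agent Atom Vertex) :
    PosFormulaD Agent Atom → M.Facet → Prop
  | .atom p, X => p ∈ M.flabel X
  | .natom p, X => p ∉ M.flabel X
  | .or φ ψ, X => M.satD φ X ∨ M.satD ψ X
  | .and φ ψ, X => M.satD φ X ∧ M.satD ψ X
  | .dknow A φ, X => ∀ Y : M.Facet, A ⊆ M.chiInter X Y → M.satD φ Y

/-- A K-simulation of `M` by `M'`: (Atom) related facets have the same labels;
(Forth) if `X R X'` and `X ∼ₐ Y` then there is `Y'` with `Y R Y'` and `X' ∼ₐ Y'`. -/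
def IsKSimulation (M : SimplicialModel Agent Atom Vertex) (M' : SimplicialModel Agent Atom Vertex')
    (R : M.Facet → M'.Facet → Prop) : Prop :=
  (∀ X X', R X X' → M.flabel X = M'.flabel X') ∧
  (∀ (a : Agent) X Y X', R X X' → M.indist a X Y →
    ∃ Y', R Y Y' ∧ M'.indist a X' Y')

/-- A D-simulation of `M` by `M'`: (Atom) related facets have the same labels;
(D-Forth) if `X R X'` then for every facet `Y` there is `Y'` with `Y R Y'` and
`χ(X ∩ Y) ⊆ χ'(X' ∩ Y')`. -/
def IsDSimulation (M : SimplicialModel Agent Atom Vertex) (M' : SimplicialModel Agent Atom Vertex')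
    (R : M.Facet → M'.Facet → Prop) : Prop :=
  (∀ X X', R X X' → M.flabel X = M'.flabel X') ∧
  (∀ X X', R X X' → ∀ Y, ∃ Y', R Y Y' ∧ M.chiInter X Y ⊆ M'.chiInter X' Y')

/-- A relation on facets is total if every facet of `M` is related to some facet of `M'`. -/
def TotalRel (M : SimplicialModel Agent Atom Vertex) (M' : SimplicialModel Agent Atom Vertex')
    (R : M.Facet → M'.Facet → Prop) : Prop :=
  ∀ X, ∃ X', R X X'

end SimplicialModel

/-- Modal depth of a formula of `L_K⁺`. -/
def PosFormula.deg {Agent Atom : Type} : PosFormula Agent Atom → ℕ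
  | .atom _ => 0
  | .natom _ => 0
  | .or φ ψ => max φ.deg ψ.deg
  | .and φ ψ => max φ.deg ψ.deg
  | .know _ φ => φ.deg + 1

/-- Modal depth of a formula of `L_D⁺`. -/
def PosFormulaD.deg {Agent Atom : Type} : PosFormulaD Agent Atom → ℕ
  | .atom _ => 0
  | .natom _ => 0
  | .or φ ψ => max φ.deg ψ.deg
  | .and φ ψ => max φ.deg ψ.deg
  | .dknow _ φ => φ.deg + 1

namespace SimplicialModel

variable {Agent Atom Vertex Vertex' : Type} [Fintype Agent]
  [DecidableEq Vertex] [DecidableEq Vertex']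

/-- The condition (Atom): related facets carry the same labels. -/
def AtomCond (M : SimplicialModel Agent Atom Vertex) (M' : SimplicialModel Agent Atom Vertex')
    (R : M.Facet → M'.Facet → Prop) : Prop :=
  ∀ X X', R X X' → M.flabel X = M'.flabel X'

/-- `n`-K-simulations, defined by induction on `n`. -/
def IsNKSimulation (M : SimplicialModel Agent Atom Vertex)
    (M' : SimplicialModel Agent Atom Vertex') :
    ℕ → (M.Facet → M'.Facet → Prop) → Prop
  | 0, R => AtomCond M M' R
  | n + 1, R => AtomCond M M' R ∧
      ∀ (a : Agent) X Y X', R X X' → M.indist a X Y →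
        ∃ (R' : M.Facet → M'.Facet → Prop) (Y' : M'.Facet),
          IsNKSimulation M M' n R' ∧ R' Y Y' ∧ M'.indist a X' Y'

/-- `n`-D-simulations, defined by induction on `n`. -/
def IsNDSimulation (M : SimplicialModel Agent Atom Vertex)
    (M' : SimplicialModel Agent Atom Vertex') :
    ℕ → (M.Facet → M'.Facet → Prop) → Prop
  | 0, R => AtomCond M M' R
  | n + 1, R =>
      ∀ X X', R X X' → ∀ Y : M.Facet,
        ∃ (R' : M.Facet → M'.Facet → Prop) (Y' : M'.Facet),
          IsNDSimulation M M' n R' ∧ R' Y Y' ∧ M.chiInter X Y ⊆ M'.chiInter X' Y'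

/-- The operator `f^K` on relations between facets. -/
def fK (M : SimplicialModel Agent Atom Vertex) (M' : SimplicialModel Agent Atom Vertex')
    (R : M.Facet → M'.Facet → Prop) : M.Facet → M'.Facet → Prop :=
  fun X X' => ∀ (a : Agent) (Y : M.Facet), M.indist a X Y →
    ∃ Y', R Y Y' ∧ M'.indist a X' Y'

/-- The operator `f^D` on relations between facets. -/
def fD (M : SimplicialModel Agent Atom Vertex) (M' : SimplicialModel Agent Atom Vertex')
    (R : M.Facet → M'.Facet → Prop) : M.Facet → M'.Facet → Prop :=
  fun X X' => ∀ Y : M.Facet, ∃ Y', R Y Y' ∧ M.chiInter X Y ⊆ M'.chiInter X' Y'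

/-- The descending sequence `S^K_n`: `S^K_0 = {(X,X') : l(X) = l'(X')}` and
`S^K_{n+1} = S^K_0 ∩ f^K(S^K_n)`. -/
def SK (M : SimplicialModel Agent Atom Vertex) (M' : SimplicialModel Agent Atom Vertex') :
    ℕ → M.Facet → M'.Facet → Prop
  | 0 => fun X X' => M.flabel X = M'.flabel X'
  | n + 1 => fun X X' => M.flabel X = M'.flabel X' ∧ fK M M' (SK M M' n) X X'

/-- The descending sequence `S^D_n`: `S^D_0 = {(X,X') : l(X) = l'(X')}` and
`S^D_{n+1} = f^D(S^D_n)`. -/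
def SD (M : SimplicialModel Agent Atom Vertex) (M' : SimplicialModel Agent Atom Vertex') :
    ℕ → M.Facet → M'.Facet → Prop
  | 0 => fun X X' => M.flabel X = M'.flabel X'
  | n + 1 => fD M M' (SD M M' n)

/-- Every agent occurs as a color in a facet's self-intersection. -/
lemma chiInter_self_univ (M : SimplicialModel Agent Atom Vertex) (X : M.Facet) :
    Set.univ ⊆ M.chiInter X X := by
  classical
  intro a _
  have hinj : Set.InjOn M.chi ↑X.1 := M.chi_injOn X.1 X.2.1
  have h3 : X.1.image M.chi = Finset.univ := by
    apply Finset.eq_univ_of_card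
    rw [Finset.card_image_of_injOn hinj, X.2.2]
  have ha : a ∈ X.1.image M.chi := h3 ▸ Finset.mem_univ a
  obtain ⟨v, hv, rfl⟩ := Finset.mem_image.mp ha
  refine ⟨v, by simp [hv], rfl⟩

/-- If all colors occur in the intersection of two facets, they are equal. -/
lemma facet_eq_of_univ_subset_chiInter (M : SimplicialModel Agent Atom Vertex)
    (X Y : M.Facet) (h : Set.univ ⊆ M.chiInter X Y) : X = Y := by
  classical
  have hinj : Set.InjOn M.chi ↑X.1 := M.chi_injOn X.1 X.2.1
  have hinj2 : Set.InjOn M.chi ↑(X.1 ∩ Y.1) := by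
    apply hinj.mono; intro v hv; exact Finset.mem_coe.mpr (Finset.mem_inter.mp hv).1
  have hcard : (X.1 ∩ Y.1).card = Fintype.card Agent := by
    have h3 : (X.1 ∩ Y.1).image M.chi = Finset.univ := by
      apply Finset.eq_univ_of_forall
      intro a
      obtain ⟨v, hv, rfl⟩ := h (Set.mem_univ a)
      exact Finset.mem_image_of_mem _ (by exact_mod_cast hv)
    rw [← Finset.card_image_of_injOn hinj2, h3, Finset.card_univ]
  have hX : X.1 ∩ Y.1 = X.1 :=
    Finset.eq_of_subset_of_card_le Finset.inter_subset_left (by rw [hcard, X.2.2])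
  have hY : X.1 ∩ Y.1 = Y.1 :=
    Finset.eq_of_subset_of_card_le Finset.inter_subset_right (by rw [hcard, Y.2.2])
  exact Subtype.ext (hX.symm.trans hY)

variable (M : SimplicialModel Agent Atom Vertex) (M' : SimplicialModel Agent Atom Vertex')

lemma SK_succ_le (n : ℕ) : ∀ X X', SK M M' (n + 1) X X' → SK M M' n X X' := by
  induction n with
  | zero => exact fun X X' h => h.1
  | succ n ih =>
    intro X X' h
    exact ⟨h.1, fun a Y hY => (h.2 a Y hY).imp fun Y' ⟨h1, h2⟩ => ⟨ih Y Y' h1, h2⟩⟩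

lemma SK_antitone {i j : ℕ} (hij : i ≤ j) : ∀ X X', SK M M' j X X' → SK M M' i X X' := by
  induction j with
  | zero => rw [Nat.le_zero.mp hij]; exact fun _ _ h => h
  | succ j ih =>
    rcases Nat.lt_succ_iff_lt_or_eq.mp (Nat.lt_succ_of_le hij) with h | rfl
    · exact fun X X' hX => ih (Nat.lt_succ_iff.mp h) X X'
        (SK_succ_le M M' j X X' hX)
    · exact fun _ _ h => h

lemma SD_succ_le (n : ℕ) : ∀ X X', SD M M' (n + 1) X X' → SD M M' n X X' := by
  induction n with
  | zero =>
    intro X X' h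
    obtain ⟨Y', hY'0, hsub⟩ := h X
    have : X' = Y' := facet_eq_of_univ_subset_chiInter M' X' Y'
      ((chiInter_self_univ M X).trans hsub)
    rw [this]; exact hY'0
  | succ n ih =>
    intro X X' h Y
    exact (h Y).imp fun Y' ⟨h1, h2⟩ => ⟨ih Y Y' h1, h2⟩

lemma SD_antitone {i j : ℕ} (hij : i ≤ j) : ∀ X X', SD M M' j X X' → SD M M' i X X' := by
  induction j with
  | zero => rw [Nat.le_zero.mp hij]; exact fun _ _ h => h
  | succ j ih =>
    rcases Nat.lt_succ_iff_lt_or_eq.mp (Nat.lt_succ_of_le hij) with h | rfl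
    · exact fun X X' hX => ih (Nat.lt_succ_iff.mp h) X X'
        (SD_succ_le M M' j X X' hX)
    · exact fun _ _ h => h

end SimplicialModel

open SimplicialModel in
/-- Pigeonhole helper: a sequence into a finite type repeats. -/
lemma exists_lt_seq_eq {α : Type*} [Finite α] (f : ℕ → α) : ∃ i j, i < j ∧ f i = f j := by
  obtain ⟨x, y, hxy, h⟩ := Finite.exists_ne_map_eq_of_infinite f
  rcases hxy.lt_or_gt with h' | h'
  · exact ⟨x, y, h', h⟩
  · exact ⟨y, x, h', h.symm⟩

open SimplicialModel in
/-- Suppose the simplicial models `M` and `M'` are finite. Then, for each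
`□ ∈ {K, D}`, there exists `n ∈ ℕ` such that `S^□_n` is the maximum
□-simulation of `M` by `M'` with respect to inclusion.  Moreover, if `S^□_m` is
total for every `m ∈ ℕ`, then this maximum □-simulation is total. -/
theorem exists_maximum_simulation_of_finite
    {Agent Atom Vertex Vertex' : Type} [Fintype Agent] [Nonempty Agent]
    [DecidableEq Vertex] [DecidableEq Vertex'] [Finite Vertex] [Finite Vertex']
    (M : SimplicialModel Agent Atom Vertex) (M' : SimplicialModel Agent Atom Vertex') :
    (∃ n : ℕ,
      (IsKSimulation M M' (SK M M' n) ∧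
        ∀ R : M.Facet → M'.Facet → Prop, IsKSimulation M M' R →
          ∀ X X', R X X' → SK M M' n X X') ∧
      ((∀ m : ℕ, TotalRel M M' (SK M M' m)) → TotalRel M M' (SK M M' n))) ∧
    (∃ n : ℕ,
      (IsDSimulation M M' (SD M M' n) ∧
        ∀ R : M.Facet → M'.Facet → Prop, IsDSimulation M M' R →
          ∀ X X', R X X' → SD M M' n X X') ∧
      ((∀ m : ℕ, TotalRel M M' (SD M M' m)) → TotalRel M M' (SD M M' n))) := by
  haveI := Fintype.ofFinite Vertex
  haveI := Fintype.ofFinite Vertex'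
  haveI : Finite M.Facet := Subtype.finite
  haveI : Finite M'.Facet := Subtype.finite
  constructor
  · -- K case
    obtain ⟨i, j, hij, hfij⟩ := exists_lt_seq_eq (fun n => SK M M' n)
    -- stabilization: SK i → SK (i+1)
    have hstab : ∀ X X', SK M M' i X X' → SK M M' (i + 1) X X' := by
      intro X X' h
      have : SK M M' j X X' := by
        have := congrFun (congrFun hfij X) X'
        simpa using this ▸ h
      exact SK_antitone M M' hij X X' this
    refine ⟨i, ⟨⟨fun X X' h => SK_antitone M M' (Nat.zero_le i) X X' h, ?_⟩, ?_⟩, fun h => h i⟩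
    · intro a X Y X' h hind
      obtain ⟨Y', hY', hind'⟩ := (hstab X X' h).2 a Y hind
      exact ⟨Y', hY', hind'⟩
    · intro R hR
      have key : ∀ m, ∀ X X', R X X' → SK M M' m X X' := by
        intro m
        induction m with
        | zero => exact fun X X' h => hR.1 X X' h
        | succ m ih =>
          intro X X' h
          refine ⟨hR.1 X X' h, fun a Y hind => ?_⟩
          obtain ⟨Y', hY', hind'⟩ := hR.2 a X Y X' h hind
          exact ⟨Y', ih Y Y' hY', hind'⟩
      exact fun X X' h => key i X X' h
  · -- D case
    obtain ⟨i, j, hij, hfij⟩ := exists_lt_seq_eq (fun n => SD M M' n)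
    have hstab : ∀ X X', SD M M' i X X' → SD M M' (i + 1) X X' := by
      intro X X' h
      have : SD M M' j X X' := by
        have := congrFun (congrFun hfij X) X'
        simpa using this ▸ h
      exact SD_antitone M M' hij X X' this
    refine ⟨i, ⟨⟨fun X X' h => SD_antitone M M' (Nat.zero_le i) X X' h, ?_⟩, ?_⟩, fun h => h i⟩
    · intro X X' h Y
      exact hstab X X' h Y
    · intro R hR
      have key : ∀ m, ∀ X X', R X X' → SD M M' m X X' := by
        intro m
        induction m with
        | zero => exact fun X X' h => hR.1 X X' h
        | succ m ih =>
          intro X X' h Y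
          obtain ⟨Y', hY', hsub⟩ := hR.2 X X' h Y
          exact ⟨Y', ih Y Y' hY', hsub⟩
      exact fun X X' h => key i X X' h
end

section
/- For each □ ∈ {K, D}, every finite simplicial model M over a finite set At of atomic propositions, every facet X of M, and every n ∈ ℕ: M, X ⊭ Φ^□_M(n, X). -/
attribute [local instance] Classical.propDecidable

namespace SimplicialModel

variable {Agent Atom Vertex : Type} [Fintype Agent] [DecidableEq Vertex]

noncomputable instance instFintypeFacet (M : SimplicialModel Agent Atom Vertex)
    [Finite Vertex] : Fintype M.Facet := by
  have : Fintype Vertex := Fintype.ofFinite _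
  have : Finite (Finset Vertex) := inferInstance
  have : Finite M.Facet := by unfold Facet; exact Subtype.finite
  exact Fintype.ofFinite _

/-- Disjunction of a finite list of formulas of `L_K⁺`; the empty disjunction
is represented by the unsatisfiable positive formula `p ∧ ¬p`. -/
noncomputable def bigOrK [Nonempty Atom] (l : List (PosFormula Agent Atom)) :
    PosFormula Agent Atom :=
  l.foldr .or
    ((PosFormula.atom (Classical.arbitrary Atom)).and
      (PosFormula.natom (Classical.arbitrary Atom)))

/-- Disjunction of a finite list of formulas of `L_D⁺`; the empty disjunction
is represented by the unsatisfiable positive formula `p ∧ ¬p`. -/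
noncomputable def bigOrD [Nonempty Atom] (l : List (PosFormulaD Agent Atom)) :
    PosFormulaD Agent Atom :=
  l.foldr .or
    ((PosFormulaD.atom (Classical.arbitrary Atom)).and
      (PosFormulaD.natom (Classical.arbitrary Atom)))

/-- `Φ^□(0, X) = ⋁_{p ∈ l(X)} ¬p ∨ ⋁_{p ∈ At ∖ l(X)} p` (as a formula of `L_K⁺`). -/
noncomputable def PhiK0 (M : SimplicialModel Agent Atom Vertex) [Fintype Atom] [Nonempty Atom]
    (X : M.Facet) : PosFormula Agent Atom :=
  (bigOrK (((Set.toFinite (M.flabel X)).toFinset.toList).map PosFormula.natom)).or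
    (bigOrK (((Set.toFinite (M.flabel X)ᶜ).toFinset.toList).map PosFormula.atom))

/-- `Φ^□(0, X) = ⋁_{p ∈ l(X)} ¬p ∨ ⋁_{p ∈ At ∖ l(X)} p` (as a formula of `L_D⁺`). -/
noncomputable def PhiD0 (M : SimplicialModel Agent Atom Vertex) [Fintype Atom] [Nonempty Atom]
    (X : M.Facet) : PosFormulaD Agent Atom :=
  (bigOrD (((Set.toFinite (M.flabel X)).toFinset.toList).map PosFormulaD.natom)).or
    (bigOrD (((Set.toFinite (M.flabel X)ᶜ).toFinset.toList).map PosFormulaD.atom))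

/-- The characteristic formulas `Φ^K(n, X)`:
`Φ^K(n+1, X) = Φ^K(0, X) ∨ ⋁_{a ∈ Π} ⋁_{Y ∈ F(M), X ∼ₐ Y} K_a Φ^K(n, Y)`. -/
noncomputable def PhiK (M : SimplicialModel Agent Atom Vertex)
    [Finite Vertex] [Fintype Atom] [Nonempty Atom] :
    ℕ → M.Facet → PosFormula Agent Atom
  | 0, X => PhiK0 M X
  | n + 1, X => (PhiK0 M X).or (bigOrK
      ((((Finset.univ : Finset (Agent × M.Facet)).filter
          (fun p => M.indist p.1 X p.2)).toList).map
        (fun p => PosFormula.know p.1 (PhiK M n p.2))))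

/-- The characteristic formulas `Φ^D(n, X)`:
`Φ^D(n+1, X) = ⋁_{Y ∈ F(M)} D_{χ(X ∩ Y)} Φ^D(n, Y)`. -/
noncomputable def PhiD (M : SimplicialModel Agent Atom Vertex)
    [Finite Vertex] [Fintype Atom] [Nonempty Atom] :
    ℕ → M.Facet → PosFormulaD Agent Atom
  | 0, X => PhiD0 M X
  | n + 1, X => bigOrD
      (((Finset.univ : Finset M.Facet).toList).map
        (fun Y => PosFormulaD.dknow (M.chiInter X Y) (PhiD M n Y)))

end SimplicialModel

/-! Every disjunct of `Φ(0, X)` is a literal that is false at `X`. Every other disjunct of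
`Φ^□(n+1, X)` is `K_a Φ^K(n, Y)` with `X ∼ₐ Y`, resp. `D_{χ(X ∩ Y)} Φ^D(n, Y)`, so `Y` is among
the facets it quantifies over; if it held at `X`, then `Φ^□(n, Y)` would hold at `Y`, which
induction on `n` rules out. -/

namespace SimplicialModel

variable {Agent Atom Vertex : Type} [Fintype Agent] [DecidableEq Vertex]
  (M : SimplicialModel Agent Atom Vertex)

theorem satK_bigOrK [Nonempty Atom] (l : List (PosFormula Agent Atom)) (X : M.Facet) :
    M.satK (bigOrK l) X ↔ ∃ φ ∈ l, M.satK φ X := by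
  induction l <;> simp_all [bigOrK, satK]

theorem satD_bigOrD [Nonempty Atom] (l : List (PosFormulaD Agent Atom)) (X : M.Facet) :
    M.satD (bigOrD l) X ↔ ∃ φ ∈ l, M.satD φ X := by
  induction l <;> simp_all [bigOrD, satD]

theorem not_satK_PhiK0 [Fintype Atom] [Nonempty Atom] (X : M.Facet) :
    ¬ M.satK (PhiK0 M X) X := by
  simp [PhiK0, satK, satK_bigOrK]

theorem not_satD_PhiD0 [Fintype Atom] [Nonempty Atom] (X : M.Facet) :
    ¬ M.satD (PhiD0 M X) X := by
  simp [PhiD0, satD, satD_bigOrD]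

variable [Finite Vertex] [Fintype Atom] [Nonempty Atom]

theorem not_satK_PhiK (n : ℕ) (X : M.Facet) : ¬ M.satK (PhiK M n X) X := by
  induction n generalizing X with
  | zero => exact M.not_satK_PhiK0 X
  | succ n ih =>
    rintro (h | h)
    · exact M.not_satK_PhiK0 X h
    · obtain ⟨_, hφ, hsat⟩ := (M.satK_bigOrK _ X).mp h
      obtain ⟨⟨a, Y⟩, hXY, rfl⟩ := List.mem_map.mp hφ
      exact ih Y (hsat Y (Finset.mem_filter.mp (Finset.mem_toList.mp hXY)).2)

theorem not_satD_PhiD (n : ℕ) (X : M.Facet) : ¬ M.satD (PhiD M n X) X := by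
  induction n generalizing X with
  | zero => exact M.not_satD_PhiD0 X
  | succ n ih =>
    intro h
    obtain ⟨_, hφ, hsat⟩ := (M.satD_bigOrD _ X).mp h
    obtain ⟨Y, -, rfl⟩ := List.mem_map.mp hφ
    exact ih Y (hsat Y subset_rfl)

end SimplicialModel

open SimplicialModel in
theorem not_sat_Phi_self_general
    {Agent Atom Vertex : Type} [Fintype Agent]
    [DecidableEq Vertex] [Finite Vertex] [Fintype Atom] [Nonempty Atom]
    (M : SimplicialModel Agent Atom Vertex) (n : ℕ) (X : M.Facet) :
    ¬ M.satK (PhiK M n X) X ∧ ¬ M.satD (PhiD M n X) X :=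
  ⟨M.not_satK_PhiK n X, M.not_satD_PhiD n X⟩

open SimplicialModel in
/-- For each `□ ∈ {K, D}`, every finite simplicial model `M` over a finite set
of atomic propositions, every facet `X` of `M` and every `n ∈ ℕ`:
`M, X ⊭ Φ^□_M(n, X)`. -/
theorem not_sat_Phi_self
    {Agent Atom Vertex : Type} [Fintype Agent] [Nonempty Agent]
    [DecidableEq Vertex] [Finite Vertex] [Fintype Atom] [Nonempty Atom]
    (M : SimplicialModel Agent Atom Vertex) (n : ℕ) (X : M.Facet) :
    ¬ M.satK (PhiK M n X) X ∧ ¬ M.satD (PhiD M n X) X :=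
  not_sat_Phi_self_general M n X
end
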